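/- Let a, b, c be complex numbers with positive real parts. Then there is a positive constant M such that for every integer n ≥ 0 and every real x, |₃F₂(−n, a+ix, a−ix; a+b, a+c; 1)| ≤ M e^{M|x|} (1+n)^M. -/

import Mathlib

/-!
Euler's Beta integral turns the terminating series into a double integral,

    ₃F₂(−n, p, q; p+v, q+w; 1) B(p,v) B(q,w)
      = ∫∫ t^(p-1) (1-t)^(v-1) s^(q-1) (1-s)^(w-1) (1-ts)^n dt ds,

whose modulus is at most `B(Re p, Re v) B(Re q, Re w)` because `|1 - ts| ≤ 1`. For `p = a+ix`,
`v = b-ix`, `q = a-ix`, `w = c+ix` these real parts do not depend on `x`, while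
`B(p,v) = Γ(p) Γ(v) / Γ(a+b)` and `B(q,w)` decay at most like `e^{-2π|x|}`, since
`|Γ(σ+iy)| ≥ c e^{-π|y|}` on every vertical line (by the reflection formula for `|y| ≥ 1` and by
compactness for `|y| ≤ 1`). So the sum is `O(e^{4π|x|})`, uniformly in `n`.
-/

/-- The Pochhammer symbol (rising factorial): `(w)_k = w (w+1) ⋯ (w+k−1)`. -/
noncomputable def poch (w : ℂ) (k : ℕ) : ℂ := ∏ i ∈ Finset.range k, (w + i)

/-- The terminating hypergeometric sum
`₃F₂(−n, p, q; r, s; 1) = ∑_{k=0}^n ((−n)_k (p)_k (q)_k)/((r)_k (s)_k k!)`. -/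
noncomputable def F32 (n : ℕ) (p q r s : ℂ) : ℂ :=
  ∑ k ∈ Finset.range (n + 1),
    poch (-(n : ℂ)) k * poch p k * poch q k / (poch r k * poch s k * (k.factorial : ℂ))

open Complex Finset

lemma poch_succ (w : ℂ) (k : ℕ) : poch w (k + 1) = poch w k * (w + k) :=
  prod_range_succ _ _

lemma poch_eq_ascPochhammer_eval (w : ℂ) (k : ℕ) : poch w k = (ascPochhammer ℂ k).eval w := by
  induction k with
  | zero => simp [poch]
  | succ k ih => simp [poch_succ, ascPochhammer_succ_right, ih]

lemma poch_ne_zero {w : ℂ} (hw : 0 < w.re) (k : ℕ) : poch w k ≠ 0 :=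
  prod_ne_zero_iff.2 fun i _ h => by
    have := congrArg re h
    simp only [add_re, natCast_re, zero_re] at this
    linarith [i.cast_nonneg (α := ℝ)]

lemma ne_neg_natCast_of_re_pos {w : ℂ} (hw : 0 < w.re) (m : ℕ) : w ≠ -m := fun h => by
  have := congrArg re h
  simp only [neg_re, natCast_re] at this
  linarith [m.cast_nonneg (α := ℝ)]

lemma ne_neg_natCast_of_im_ne_zero {w : ℂ} (hw : w.im ≠ 0) (m : ℕ) : w ≠ -m := fun h =>
  hw (by simp [h])

lemma Gamma_add_nat_eq_poch_mul_Gamma {w : ℂ} (hw : ∀ m : ℕ, w ≠ -m) (k : ℕ) :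
    Gamma (w + k) = poch w k * Gamma w := by
  rw [poch_eq_ascPochhammer_eval, ← Gamma_add_nat_div_Gamma_eq w hw,
    div_mul_cancel₀ _ (Gamma_ne_zero hw)]

lemma poch_neg_natCast_div_factorial (n k : ℕ) :
    poch (-(n : ℂ)) k / k.factorial = (-1) ^ k * n.choose k := by
  rw [poch_eq_ascPochhammer_eval, ascPochhammer_eval_neg_eq_descPochhammer,
    descPochhammer_eval_eq_descFactorial, Nat.descFactorial_eq_factorial_mul_choose]
  have : (k.factorial : ℂ) ≠ 0 := by exact_mod_cast k.factorial_ne_zero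
  push_cast
  field_simp

lemma sum_poch_neg_natCast_div_factorial_mul_pow (n : ℕ) (z : ℂ) :
    ∑ k ∈ range (n + 1), poch (-(n : ℂ)) k / k.factorial * z ^ k = (1 - z) ^ n := by
  rw [sub_eq_neg_add, add_pow]
  refine sum_congr rfl fun k _ => ?_
  rw [poch_neg_natCast_div_factorial, neg_pow]
  ring

lemma poch_mul_betaIntegral_add_nat {p v : ℂ} (hp : 0 < p.re) (hv : 0 < v.re) (k : ℕ) :
    poch (p + v) k * betaIntegral (p + k) v = poch p k * betaIntegral p v := by
  have hpv : 0 < (p + v).re := by rw [add_re]; positivity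
  have hpk : 0 < (p + k).re := by simp only [add_re, natCast_re]; positivity
  have hΓ : Gamma (p + v) ≠ 0 := Gamma_ne_zero_of_re_pos hpv
  have shifted := Gamma_mul_Gamma_eq_betaIntegral hpk hv
  rw [Gamma_add_nat_eq_poch_mul_Gamma (ne_neg_natCast_of_re_pos hp),
    show p + k + v = p + v + k by ring,
    Gamma_add_nat_eq_poch_mul_Gamma (ne_neg_natCast_of_re_pos hpv), mul_assoc,
    Gamma_mul_Gamma_eq_betaIntegral hp hv] at shifted
  apply mul_left_cancel₀ hΓ
  linear_combination -shifted

lemma sum_mul_betaIntegral_add_nat {q w : ℂ} (hq : 0 < q.re) (hw : 0 < w.re) (N : ℕ)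
    (c : ℕ → ℂ) :
    ∑ k ∈ range N, c k * betaIntegral (q + k) w =
      ∫ s in (0 : ℝ)..1, (s : ℂ) ^ (q - 1) * (1 - (s : ℂ)) ^ (w - 1) *
        ∑ k ∈ range N, c k * (s : ℂ) ^ k := by
  have hqk (k : ℕ) : 0 < (q + k).re := by simp only [add_re, natCast_re]; positivity
  simp only [betaIntegral, ← intervalIntegral.integral_const_mul]
  rw [← intervalIntegral.integral_finsetSum fun k _ =>
    (betaIntegral_convergent (hqk k) hw).const_mul _]
  refine intervalIntegral.integral_congr_ae (Filter.Eventually.of_forall fun s hs => ?_)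
  have hs0 : (s : ℂ) ≠ 0 := ofReal_ne_zero.2 (Set.uIoc_of_le (zero_le_one' ℝ) ▸ hs).1.ne'
  rw [mul_sum]
  refine sum_congr rfl fun k _ => ?_
  rw [show q + k - 1 = q - 1 + k by ring, cpow_add _ _ hs0, cpow_natCast]
  ring

lemma F32_mul_betaIntegral_mul_betaIntegral {p q v w : ℂ} (hp : 0 < p.re) (hq : 0 < q.re)
    (hv : 0 < v.re) (hw : 0 < w.re) (n : ℕ) :
    F32 n p q (p + v) (q + w) * (betaIntegral p v * betaIntegral q w) =
      ∫ t in (0 : ℝ)..1, (t : ℂ) ^ (p - 1) * (1 - (t : ℂ)) ^ (v - 1) *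
        ∫ s in (0 : ℝ)..1, (s : ℂ) ^ (q - 1) * (1 - (s : ℂ)) ^ (w - 1) * (1 - t * s) ^ n := by
  have hpv : 0 < (p + v).re := by rw [add_re]; positivity
  have hqw : 0 < (q + w).re := by rw [add_re]; positivity
  have termwise : F32 n p q (p + v) (q + w) * (betaIntegral p v * betaIntegral q w) =
      ∑ k ∈ range (n + 1), poch (-(n : ℂ)) k / k.factorial * betaIntegral (q + k) w *
        betaIntegral (p + k) v := by
    rw [F32, sum_mul]
    refine sum_congr rfl fun k _ => ?_
    have := poch_ne_zero hpv k
    have := poch_ne_zero hqw k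
    calc _ = poch (-(n : ℂ)) k / k.factorial * (poch p k * betaIntegral p v) *
          (poch q k * betaIntegral q w) / (poch (p + v) k * poch (q + w) k) := by ring
      _ = _ := by
        rw [← poch_mul_betaIntegral_add_nat hp hv, ← poch_mul_betaIntegral_add_nat hq hw]
        field_simp
  rw [termwise, sum_mul_betaIntegral_add_nat hp hv]
  refine intervalIntegral.integral_congr fun t _ => ?_
  have inner : ∑ k ∈ range (n + 1), poch (-(n : ℂ)) k / k.factorial * betaIntegral (q + k) w *
      (t : ℂ) ^ k = ∑ k ∈ range (n + 1), (poch (-(n : ℂ)) k / k.factorial * (t : ℂ) ^ k) *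
      betaIntegral (q + k) w := sum_congr rfl fun k _ => by ring
  have binomial (s : ℝ) : ∑ k ∈ range (n + 1), poch (-(n : ℂ)) k / k.factorial * (t : ℂ) ^ k *
      (s : ℂ) ^ k = (1 - t * s) ^ n := by
    rw [← sum_poch_neg_natCast_div_factorial_mul_pow]
    exact sum_congr rfl fun k _ => by ring
  simp only [inner, sum_mul_betaIntegral_add_nat hq hw, binomial]

open MeasureTheory

lemma norm_cpow_mul_one_sub_cpow {t : ℝ} (ht : t ∈ Set.Ioo 0 1) (u v : ℂ) :
    ‖(t : ℂ) ^ (u - 1) * (1 - (t : ℂ)) ^ (v - 1)‖ = t ^ (u.re - 1) * (1 - t) ^ (v.re - 1) := by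
  rw [norm_mul, ← ofReal_one, ← ofReal_sub, norm_cpow_eq_rpow_re_of_pos ht.1,
    norm_cpow_eq_rpow_re_of_pos (sub_pos.2 ht.2)]
  simp

lemma intervalIntegrable_rpow_mul_one_sub_rpow {α β : ℝ} (hα : 0 < α) (hβ : 0 < β) :
    IntervalIntegrable (fun t : ℝ => t ^ (α - 1) * (1 - t) ^ (β - 1)) volume 0 1 := by
  refine (betaIntegral_convergent (u := α) (v := β) (by simpa) (by simpa)).norm.congr_uIoo
    fun t ht => ?_
  rw [Set.uIoo_of_le zero_le_one] at ht
  simpa using norm_cpow_mul_one_sub_cpow ht α β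

lemma norm_integral_cpow_mul_one_sub_cpow_mul_le {p v : ℂ} (hp : 0 < p.re) (hv : 0 < v.re)
    {g : ℝ → ℂ} {C : ℝ} (hg : ∀ t ∈ Set.Ioo 0 1, ‖g t‖ ≤ C) :
    ‖∫ t in (0 : ℝ)..1, (t : ℂ) ^ (p - 1) * (1 - (t : ℂ)) ^ (v - 1) * g t‖ ≤
      (∫ t in (0 : ℝ)..1, t ^ (p.re - 1) * (1 - t) ^ (v.re - 1)) * C := by
  rw [← intervalIntegral.integral_mul_const]
  refine intervalIntegral.norm_integral_le_of_norm_le zero_le_one ?_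
    ((intervalIntegrable_rpow_mul_one_sub_rpow hp hv).mul_const C)
  filter_upwards [Measure.ae_ne volume 1] with t ht1 ht
  have ht' : t ∈ Set.Ioo 0 1 := ⟨ht.1, lt_of_le_of_ne ht.2 ht1⟩
  rw [norm_mul, norm_cpow_mul_one_sub_cpow ht']
  exact mul_le_mul_of_nonneg_left (hg t ht') <|
    mul_nonneg (Real.rpow_nonneg ht'.1.le _) (Real.rpow_nonneg (sub_nonneg.2 ht'.2.le) _)

lemma norm_one_sub_mul_pow_le_one {t s : ℝ} (ht : t ∈ Set.Ioo 0 1) (hs : s ∈ Set.Ioo 0 1)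
    (n : ℕ) :
    ‖(1 - (t : ℂ) * s) ^ n‖ ≤ 1 := by
  have hts : 0 < t * s ∧ t * s < 1 :=
    ⟨mul_pos ht.1 hs.1, mul_lt_one_of_nonneg_of_lt_one_left ht.1.le ht.2 hs.2.le⟩
  rw [norm_pow, ← ofReal_mul, ← ofReal_one, ← ofReal_sub, norm_real, Real.norm_eq_abs,
    abs_of_pos (sub_pos.2 hts.2)]
  exact pow_le_one₀ (sub_nonneg.2 hts.2.le) (by linarith)

lemma norm_F32_mul_betaIntegral_mul_betaIntegral_le {p q v w : ℂ} (hp : 0 < p.re)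
    (hq : 0 < q.re) (hv : 0 < v.re) (hw : 0 < w.re) (n : ℕ) :
    ‖F32 n p q (p + v) (q + w) * (betaIntegral p v * betaIntegral q w)‖ ≤
      (∫ t in (0 : ℝ)..1, t ^ (p.re - 1) * (1 - t) ^ (v.re - 1)) *
        ∫ s in (0 : ℝ)..1, s ^ (q.re - 1) * (1 - s) ^ (w.re - 1) := by
  rw [F32_mul_betaIntegral_mul_betaIntegral hp hq hv hw]
  refine norm_integral_cpow_mul_one_sub_cpow_mul_le hp hv fun t ht => ?_
  refine (norm_integral_cpow_mul_one_sub_cpow_mul_le hq hw fun s hs => ?_).trans_eq (mul_one _)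
  exact norm_one_sub_mul_pow_le_one ht hs n

open scoped Real

lemma norm_Gamma_le_Gamma_re {w : ℂ} (hw : 0 < w.re) : ‖Gamma w‖ ≤ Real.Gamma w.re := by
  rw [Gamma_eq_integral hw, Real.Gamma_eq_integral hw, GammaIntegral]
  refine (norm_integral_le_integral_norm _).trans_eq <|
    setIntegral_congr_fun measurableSet_Ioi fun x (hx : 0 < x) => ?_
  rw [norm_mul, norm_real, Real.norm_of_nonneg (Real.exp_nonneg _),
    norm_cpow_eq_rpow_re_of_pos hx]
  simp

lemma norm_sin_le_exp_abs_im (z : ℂ) : ‖sin z‖ ≤ Real.exp |z.im| := by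
  have h₁ : ‖exp (-z * I)‖ ≤ Real.exp |z.im| := by
    rw [norm_exp]; exact Real.exp_le_exp.2 (by simpa using le_abs_self z.im)
  have h₂ : ‖exp (z * I)‖ ≤ Real.exp |z.im| := by
    rw [norm_exp]; exact Real.exp_le_exp.2 (by simpa using neg_le_abs z.im)
  calc ‖sin z‖ = ‖exp (-z * I) - exp (z * I)‖ / 2 := by simp [sin]
    _ ≤ (‖exp (-z * I)‖ + ‖exp (z * I)‖) / 2 := by gcongr; exact norm_sub_le _ _
    _ ≤ Real.exp |z.im| := by linarith

lemma one_le_norm_poch {w : ℂ} (hw : 1 ≤ |w.im|) (k : ℕ) : 1 ≤ ‖poch w k‖ := by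
  rw [poch, norm_prod]
  refine one_le_prod fun i _ => hw.trans ?_
  simpa using abs_im_le_norm (w + i)

/-- Reflection formula, with `|Γ(1 - z)| ≤ |Γ(1 - z + k)| ≤ Γ(k + 1 - Re z)` because every factor
of `(1 - z)_k` has modulus at least `|Im z| ≥ 1`. -/
lemma div_Gamma_mul_exp_le_norm_Gamma {z : ℂ} {k : ℕ} (hk : z.re < k + 1)
    (him : 1 ≤ |z.im|) :
    π / Real.Gamma (k + 1 - z.re) * Real.exp (-π * |z.im|) ≤ ‖Gamma z‖ := by
  have him' : 1 ≤ |(1 - z).im| := by simpa using him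
  have hne (w : ℂ) (hw : 1 ≤ |w.im|) : ∀ m : ℕ, w ≠ -m :=
    ne_neg_natCast_of_im_ne_zero (abs_pos.1 (one_pos.trans_le hw))
  have hΓ₁ : 0 < ‖Gamma (1 - z)‖ := norm_pos_iff.2 (Gamma_ne_zero (hne _ him'))
  have hshift : ‖Gamma (1 - z)‖ ≤ Real.Gamma (k + 1 - z.re) := by
    have hre : 0 < (1 - z + k).re := by simp only [sub_re, add_re, one_re, natCast_re]; linarith
    calc ‖Gamma (1 - z)‖ ≤ ‖poch (1 - z) k‖ * ‖Gamma (1 - z)‖ :=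
          le_mul_of_one_le_left hΓ₁.le (one_le_norm_poch him' k)
      _ = ‖Gamma (1 - z + k)‖ := by rw [Gamma_add_nat_eq_poch_mul_Gamma (hne _ him'), norm_mul]
      _ ≤ Real.Gamma (k + 1 - z.re) := by
          refine (norm_Gamma_le_Gamma_re hre).trans_eq ?_
          simp only [sub_re, add_re, one_re, natCast_re]; ring_nf
  have hreflect := Gamma_mul_Gamma_one_sub z
  have hsin : 0 < ‖sin (π * z)‖ := by
    refine norm_pos_iff.2 fun h => ?_
    rw [h, div_zero] at hreflect
    exact mul_ne_zero (Gamma_ne_zero (hne _ him)) (Gamma_ne_zero (hne _ him')) hreflect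
  have hsin_le : ‖sin (π * z)‖ ≤ Real.exp (π * |z.im|) := by
    simpa [abs_mul, abs_of_pos Real.pi_pos] using norm_sin_le_exp_abs_im (π * z)
  have key : π * Real.exp (-π * |z.im|) ≤ ‖Gamma z‖ * ‖Gamma (1 - z)‖ := by
    rw [← norm_mul, hreflect, norm_div, norm_real, Real.norm_of_nonneg Real.pi_pos.le, neg_mul,
      Real.exp_neg, ← div_eq_mul_inv]
    exact div_le_div_of_nonneg_left Real.pi_pos.le hsin hsin_le
  have hΓr : 0 < Real.Gamma (k + 1 - z.re) := Real.Gamma_pos_of_pos (by linarith)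
  rw [div_mul_eq_mul_div, div_le_iff₀ hΓr]
  exact key.trans (mul_le_mul_of_nonneg_left hshift (norm_nonneg _))

lemma exists_pos_le_norm_Gamma_of_isCompact {K : Set ℂ} (hK : IsCompact K)
    (hre : ∀ z ∈ K, 0 < z.re) : ∃ m > 0, ∀ z ∈ K, m ≤ ‖Gamma z‖ :=
  hK.exists_forall_le'
    (fun z hz => (differentiableAt_Gamma z (ne_neg_natCast_of_re_pos (hre z hz))).continuousAt
      |>.norm.continuousWithinAt)
    fun z hz => norm_pos_iff.2 (Gamma_ne_zero_of_re_pos (hre z hz))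

lemma exists_mul_exp_le_norm_Gamma {σ : ℝ} (hσ : 0 < σ) :
    ∃ c > 0, ∀ z : ℂ, z.re = σ → c * Real.exp (-π * |z.im|) ≤ ‖Gamma z‖ := by
  obtain ⟨m, hm, hmK⟩ := exists_pos_le_norm_Gamma_of_isCompact
    (isCompact_Icc.reProdIm (isCompact_Icc (a := -1) (b := 1)))
    (K := Set.Icc σ σ ×ℂ Set.Icc (-1) 1) fun z hz => (mem_reProdIm.1 hz).1.1.trans_lt' hσ
  have hΓr : 0 < Real.Gamma (⌈σ⌉₊ + 1 - σ) :=
    Real.Gamma_pos_of_pos (by linarith [Nat.le_ceil σ])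
  refine ⟨min m (π / Real.Gamma (⌈σ⌉₊ + 1 - σ)), by positivity, fun z hz => ?_⟩
  rcases le_or_gt |z.im| 1 with him | him
  · have hzK : z ∈ Set.Icc σ σ ×ℂ Set.Icc (-1) 1 :=
      mem_reProdIm.2 ⟨⟨hz.ge, hz.le⟩, abs_le.1 him⟩
    calc min m _ * Real.exp (-π * |z.im|) ≤ m * 1 := by
          gcongr
          · exact min_le_left _ _
          · exact Real.exp_le_one_iff.2 (by nlinarith [Real.pi_pos, abs_nonneg z.im])
      _ ≤ ‖Gamma z‖ := (mul_one m).trans_le (hmK z hzK)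
  · calc min m _ * Real.exp (-π * |z.im|)
        ≤ π / Real.Gamma (⌈σ⌉₊ + 1 - σ) * Real.exp (-π * |z.im|) := by
          gcongr; exact min_le_right _ _
      _ ≤ ‖Gamma z‖ := by
          have := div_Gamma_mul_exp_le_norm_Gamma (k := ⌈σ⌉₊) (by linarith [Nat.le_ceil σ]) him.le
          rwa [hz] at this

lemma exists_mul_exp_le_norm_Gamma_add_I_mul {w : ℂ} (hw : 0 < w.re) :
    ∃ c > 0, ∀ x : ℝ, c * Real.exp (-π * |x|) ≤ ‖Gamma (w + I * x)‖ := by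
  obtain ⟨c, hc, hΓ⟩ := exists_mul_exp_le_norm_Gamma hw
  refine ⟨c * Real.exp (-π * |w.im|), by positivity, fun x => ?_⟩
  refine le_trans ?_ (hΓ (w + I * x) (by simp))
  rw [mul_assoc, ← Real.exp_add]
  gcongr
  have : |(w + I * x).im| ≤ |w.im| + |x| := by simpa using abs_add_le w.im x
  nlinarith [Real.pi_pos]

lemma exists_mul_exp_le_norm_betaIntegral {u v : ℂ} (hu : 0 < u.re) (hv : 0 < v.re) :
    ∃ c > 0, ∀ x : ℝ,
      c * Real.exp (-(2 * π) * |x|) ≤ ‖betaIntegral (u + I * x) (v - I * x)‖ := by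
  obtain ⟨cu, hcu, hΓu⟩ := exists_mul_exp_le_norm_Gamma_add_I_mul hu
  obtain ⟨cv, hcv, hΓv⟩ := exists_mul_exp_le_norm_Gamma_add_I_mul hv
  have huv : 0 < ‖Gamma (u + v)‖ :=
    norm_pos_iff.2 (Gamma_ne_zero_of_re_pos (by rw [add_re]; positivity))
  refine ⟨cu * cv / ‖Gamma (u + v)‖, by positivity, fun x => ?_⟩
  have hbeta := Gamma_mul_Gamma_eq_betaIntegral (s := u + I * x) (t := v - I * x)
    (by simpa using hu) (by simpa using hv)
  rw [show u + I * x + (v - I * x) = u + v by ring] at hbeta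
  have hΓv' := hΓv (-x)
  rw [abs_neg, ofReal_neg, mul_neg, ← sub_eq_add_neg] at hΓv'
  rw [div_mul_eq_mul_div, div_le_iff₀' huv, ← norm_mul, ← hbeta, norm_mul,
    show -(2 * π) * |x| = -π * |x| + -π * |x| by ring, Real.exp_add]
  calc cu * cv * (Real.exp (-π * |x|) * Real.exp (-π * |x|))
      = (cu * Real.exp (-π * |x|)) * (cv * Real.exp (-π * |x|)) := by ring
    _ ≤ _ := mul_le_mul (hΓu x) hΓv' (by positivity) (norm_nonneg _)

lemma exists_norm_F32_le_mul_exp {a b c : ℂ} (ha : 0 < a.re) (hb : 0 < b.re) (hc : 0 < c.re) :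
    ∃ C, ∀ (n : ℕ) (x : ℝ), ‖F32 n (a + I * x) (a - I * x) (a + b) (a + c)‖ ≤
      C * Real.exp (4 * π * |x|) := by
  obtain ⟨c₁, hc₁, hB₁⟩ := exists_mul_exp_le_norm_betaIntegral ha hb
  obtain ⟨c₂, hc₂, hB₂⟩ := exists_mul_exp_le_norm_betaIntegral ha hc
  refine ⟨(∫ t in (0 : ℝ)..1, t ^ (a.re - 1) * (1 - t) ^ (b.re - 1)) *
    (∫ s in (0 : ℝ)..1, s ^ (a.re - 1) * (1 - s) ^ (c.re - 1)) / (c₁ * c₂), fun n x => ?_⟩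
  have hJ := norm_F32_mul_betaIntegral_mul_betaIntegral_le (p := a + I * x) (q := a - I * x)
    (v := b - I * x) (w := c + I * x) (by simpa) (by simpa) (by simpa) (by simpa) n
  simp only [add_re, sub_re, mul_re, I_re, I_im, ofReal_re, ofReal_im, zero_mul, mul_zero,
    sub_zero, add_zero, show a + I * x + (b - I * x) = a + b by ring,
    show a - I * x + (c + I * x) = a + c by ring] at hJ
  have hB₂' := hB₂ (-x)
  rw [abs_neg, ofReal_neg, mul_neg, ← sub_eq_add_neg, sub_neg_eq_add] at hB₂'
  have hlower : c₁ * c₂ * Real.exp (-(4 * π) * |x|) ≤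
      ‖betaIntegral (a + I * x) (b - I * x)‖ * ‖betaIntegral (a - I * x) (c + I * x)‖ := by
    rw [show -(4 * π) * |x| = -(2 * π) * |x| + -(2 * π) * |x| by ring, Real.exp_add]
    calc c₁ * c₂ * (Real.exp (-(2 * π) * |x|) * Real.exp (-(2 * π) * |x|))
        = (c₁ * Real.exp (-(2 * π) * |x|)) * (c₂ * Real.exp (-(2 * π) * |x|)) := by ring
      _ ≤ _ := mul_le_mul (hB₁ x) hB₂' (by positivity) (norm_nonneg _)
  rw [norm_mul, norm_mul] at hJ
  have key := (mul_le_mul_of_nonneg_left hlower (norm_nonneg _)).trans hJ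
  rw [← le_div_iff₀ (by positivity)] at key
  refine key.trans_eq ?_
  rw [neg_mul, Real.exp_neg]
  field_simp

/-- If `a, b, c` have positive real parts, then there is `M > 0` such that for every
integer `n ≥ 0` and real `x`:
`|₃F₂(−n, a+ix, a−ix; a+b, a+c; 1)| ≤ M e^{M|x|} (1+n)^M`. -/
theorem stmt9 (a b c : ℂ) (ha : 0 < a.re) (hb : 0 < b.re) (hc : 0 < c.re) :
    ∃ M > (0 : ℝ), ∀ (n : ℕ) (x : ℝ),
      ‖F32 n (a + Complex.I * x) (a - Complex.I * x) (a + b) (a + c)‖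
        ≤ M * Real.exp (M * |x|) * ((1 : ℝ) + n) ^ M := by
  obtain ⟨C, hC⟩ := exists_norm_F32_le_mul_exp ha hb hc
  refine ⟨max C 1 + 4 * π, by positivity, fun n x => ?_⟩
  have hn : (1 : ℝ) ≤ (1 + n) ^ (max C 1 + 4 * π) :=
    Real.one_le_rpow (by linarith [n.cast_nonneg (α := ℝ)]) (by positivity)
  calc ‖F32 n (a + I * x) (a - I * x) (a + b) (a + c)‖ ≤ C * Real.exp (4 * π * |x|) := hC n x
    _ ≤ (max C 1 + 4 * π) * Real.exp ((max C 1 + 4 * π) * |x|) * 1 := by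
        rw [mul_one]
        gcongr
        · linarith [le_max_left C 1, Real.pi_pos]
        · linarith [le_max_right C 1]
    _ ≤ _ := by gcongr
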